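/- If X = X₁ ∪ X₂ is a coarse space and both X₁ and X₂ (with inherited coarse structures) have straight finite coarse decomposition complexity, then X has straight finite coarse decomposition complexity. -/

import Mathlib

open Set
open scoped ENNReal

universe u v

/-- A coarse structure on a set `X`: a collection of entourages closed under
subsets, finite unions, inverses and compositions, containing the diagonal. -/
structure CoarseStructure (X : Type u) where
  IsEnt : Set (X × X) → Prop
  subset_mem : ∀ {E F : Set (X × X)}, IsEnt F → E ⊆ F → IsEnt E
  union_mem : ∀ {E F : Set (X × X)}, IsEnt E → IsEnt F → IsEnt (E ∪ F)
  diag_mem : IsEnt {p : X × X | p.1 = p.2}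
  inv_mem : ∀ {E : Set (X × X)}, IsEnt E → IsEnt {p : X × X | (p.2, p.1) ∈ E}
  comp_mem : ∀ {E F : Set (X × X)}, IsEnt E → IsEnt F →
    IsEnt {p : X × X | ∃ y, (p.1, y) ∈ E ∧ (y, p.2) ∈ F}

variable {X : Type u} {Y : Type v}

/-- Composition of relations. -/
def rcomp (E F : Set (X × X)) : Set (X × X) :=
  {p : X × X | ∃ y, (p.1, y) ∈ E ∧ (y, p.2) ∈ F}

/-- Iterated composition `E^k`, with `E^0` the diagonal. -/
def rpow (E : Set (X × X)) : ℕ → Set (X × X)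
  | 0 => {p : X × X | p.1 = p.2}
  | k + 1 => rcomp (rpow E k) E

/-- A relation is symmetric if it equals its inverse. -/
def SymmRel (E : Set (X × X)) : Prop := ∀ p : X × X, p ∈ E → (p.2, p.1) ∈ E

/-- `Δ_U = ⋃_{A ∈ U} A × A`. -/
def famDiag (U : Set (Set X)) : Set (X × X) := ⋃ A ∈ U, A ×ˢ A

/-- A family of subsets is uniformly bounded if `⋃ A × A` is an entourage. -/
def UnifBdd (C : CoarseStructure X) (U : Set (Set X)) : Prop := C.IsEnt (famDiag U)

/-- A family of subsets is `L`-disjoint. -/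
def LDisj (L : Set (X × X)) (U : Set (Set X)) : Prop :=
  ∀ A ∈ U, ∀ B ∈ U, A ≠ B → (A ×ˢ B) ∩ L = ∅

/-- Coarse property C. -/
def CoarsePropC (C : CoarseStructure X) : Prop :=
  ∀ L : ℕ → Set (X × X), (∀ i, C.IsEnt (L i)) → (∀ i, L i ⊆ L (i + 1)) →
    ∃ n : ℕ, ∃ U : ℕ → Set (Set X),
      (∀ x : X, ∃ i < n, ∃ A ∈ U i, x ∈ A) ∧
      (∀ i < n, UnifBdd C (U i)) ∧
      (∀ i < n, LDisj (L i) (U i))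

/-- Coarse property C for a subspace `S ⊆ X` (with the inherited coarse structure). -/
def CoarsePropCOn (C : CoarseStructure X) (S : Set X) : Prop :=
  ∀ L : ℕ → Set (X × X), (∀ i, C.IsEnt (L i)) → (∀ i, L i ⊆ L (i + 1)) →
    ∃ n : ℕ, ∃ U : ℕ → Set (Set X),
      (∀ i < n, ∀ A ∈ U i, A ⊆ S) ∧
      (∀ x ∈ S, ∃ i < n, ∃ A ∈ U i, x ∈ A) ∧
      (∀ i < n, UnifBdd C (U i)) ∧
      (∀ i < n, LDisj (L i) (U i))

/-- Coarse asymptotic dimension at most `n`. -/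
def CoarseASDimLE (C : CoarseStructure X) (n : ℕ) : Prop :=
  ∀ L : Set (X × X), C.IsEnt L → ∃ U : ℕ → Set (Set X),
    (∀ x : X, ∃ i ≤ n, ∃ A ∈ U i, x ∈ A) ∧
    (∀ i ≤ n, UnifBdd C (U i)) ∧
    (∀ i ≤ n, LDisj L (U i))

/-- The extended natural-valued metric `D(x,y) = min {k : (x,y) ∈ E^k}` induced by `E`. -/
noncomputable def eDist (E : Set (X × X)) (x y : X) : ℕ∞ :=
  sInf ((fun k : ℕ => (k : ℕ∞)) '' {k : ℕ | (x, y) ∈ rpow E k})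

/-- Distance from a point to a set, for the metric induced by `E`. -/
noncomputable def eDistSet (E : Set (X × X)) (x : X) (A : Set X) : ℕ∞ :=
  sInf (eDist E x '' A)

/-- `ℝ≥0∞`-valued version of the metric induced by `E`. -/
noncomputable def nDist (E : Set (X × X)) (x y : X) : ℝ≥0∞ :=
  sInf ((fun k : ℕ => (k : ℝ≥0∞)) '' {k : ℕ | (x, y) ∈ rpow E k})

/-- `ℝ≥0∞`-valued distance from a point to a set. -/
noncomputable def nDistSet (E : Set (X × X)) (x : X) (A : Set X) : ℝ≥0∞ :=
  sInf (nDist E x '' A)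

/-- The map `f × f`. -/
def mapProd (f : X → Y) : X × X → Y × Y := fun p => (f p.1, f p.2)

/-- Bornologous maps: images of entourages are entourages. -/
def Bornologous (CX : CoarseStructure X) (CY : CoarseStructure Y) (f : X → Y) : Prop :=
  ∀ E : Set (X × X), CX.IsEnt E → CY.IsEnt (mapProd f '' E)

/-- Proper maps: preimages of bounded sets are bounded. -/
def ProperCoarse (CX : CoarseStructure X) (CY : CoarseStructure Y) (f : X → Y) : Prop :=
  ∀ B : Set Y, CY.IsEnt (B ×ˢ B) → CX.IsEnt ((f ⁻¹' B) ×ˢ (f ⁻¹' B))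

/-- A coarse map is proper and bornologous. -/
def CoarseMap (CX : CoarseStructure X) (CY : CoarseStructure Y) (f : X → Y) : Prop :=
  ProperCoarse CX CY f ∧ Bornologous CX CY f

/-- A coarsely uniform embedding. -/
def CoarseUnifEmb (CX : CoarseStructure X) (CY : CoarseStructure Y) (f : X → Y) : Prop :=
  ProperCoarse CX CY f ∧ Bornologous CX CY f ∧
    ∀ F : Set (Y × Y), CY.IsEnt F → CX.IsEnt (mapProd f ⁻¹' F)

/-- Two maps are close if the set of pairs of their values is an entourage. -/
def Close (C : CoarseStructure X) (f g : Y → X) : Prop :=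
  C.IsEnt (Set.range fun y => (f y, g y))

/-- Coarse equivalence of coarse spaces. -/
def CoarseEquiv (CX : CoarseStructure X) (CY : CoarseStructure Y) : Prop :=
  ∃ f : X → Y, ∃ g : Y → X, CoarseMap CX CY f ∧ CoarseMap CY CX g ∧
    Close CX (g ∘ f) id ∧ Close CY (f ∘ g) id

/-- A weak `(L,d)`-decomposition of the set `Z` over the family `Y`. -/
def WeakDecomp (L : Set (X × X)) (d : ℕ) (Z : Set X) (Y : Set (Set X)) : Prop :=
  ∃ P : Fin d → Set (Set X), (∀ i, P i ⊆ Y) ∧ (∀ i, LDisj L (P i)) ∧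
    Z = ⋃ i, ⋃ A ∈ P i, A

/-- A family admits a weak `(L,d)`-decomposition over `Y` if each member does. -/
def FamDecomp (L : Set (X × X)) (d : ℕ) (F Y : Set (Set X)) : Prop :=
  ∀ Z ∈ F, WeakDecomp L d Z Y

/-- Straight finite coarse decomposition complexity of a family of subsets. -/
def sFCDC (C : CoarseStructure X) (F : Set (Set X)) : Prop :=
  ∀ L : ℕ → Set (X × X), (∀ i, C.IsEnt (L i)) → (∀ i, L i ⊆ L (i + 1)) →
    ∃ n : ℕ, ∃ Y : ℕ → Set (Set X), Y 0 = F ∧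
      (∀ i < n, FamDecomp (L i) 2 (Y i) (Y (i + 1))) ∧ UnifBdd C (Y n)

/-- Finite weak coarse decomposition complexity (one-step form). -/
def FWCDC (C : CoarseStructure X) : Prop :=
  ∀ L : Set (X × X), C.IsEnt L →
    ∃ d : ℕ, ∃ Y : Set (Set X), UnifBdd C Y ∧ WeakDecomp L d Set.univ Y

/-- `N_L(V, U)`. -/
def NL (L : Set (X × X)) (U : Set (Set X)) (V : Set X) : Set X :=
  V ∪ ⋃ A ∈ {A ∈ U | ((A ×ˢ V) ∩ L).Nonempty}, A

/-- The `L`-saturated union `V ∪_L U`. -/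
def satUnion (L : Set (X × X)) (V U : Set (Set X)) : Set (Set X) :=
  (NL L U '' V) ∪ {A ∈ U | ∀ W ∈ V, (A ×ˢ W) ∩ L = ∅}

/-- The bounded coarse structure of a (pseudo)metric space. -/
def boundedCoarse (X : Type u) [PseudoMetricSpace X] : CoarseStructure X where
  IsEnt E := ∃ R : ℝ, ∀ p ∈ E, dist p.1 p.2 ≤ R
  subset_mem := fun h hsub => ⟨h.choose, fun p hp => h.choose_spec p (hsub hp)⟩
  union_mem := fun hE hF => ⟨max hE.choose hF.choose, by
    rintro p (hp | hp)
    · exact (hE.choose_spec p hp).trans (le_max_left _ _)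
    · exact (hF.choose_spec p hp).trans (le_max_right _ _)⟩
  diag_mem := ⟨0, by
    rintro ⟨a, b⟩ hab
    simp only [Set.mem_setOf_eq] at hab
    simp [hab]⟩
  inv_mem := fun hE => ⟨hE.choose, by
    intro p hp
    rw [dist_comm]
    exact hE.choose_spec _ hp⟩
  comp_mem := fun hE hF => ⟨hE.choose + hF.choose, by
    rintro p ⟨y, h1, h2⟩
    calc dist p.1 p.2 ≤ dist p.1 y + dist y p.2 := dist_triangle _ _ _
      _ ≤ _ := add_le_add (hE.choose_spec _ h1) (hF.choose_spec _ h2)⟩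

/-- Uniformly bounded family of subsets of a metric space. -/
def MUnifBdd {X : Type u} [PseudoMetricSpace X] (U : Set (Set X)) : Prop :=
  ∃ B : ℝ, ∀ A ∈ U, ∀ x ∈ A, ∀ y ∈ A, dist x y ≤ B

/-- `R`-disjoint family of subsets of a metric space. -/
def MDisj {X : Type u} [PseudoMetricSpace X] (R : ℝ) (U : Set (Set X)) : Prop :=
  ∀ A ∈ U, ∀ B ∈ U, A ≠ B → ∀ x ∈ A, ∀ y ∈ B, R < dist x y

/-- Asymptotic property C of a metric space. -/
def AsympPropC (X : Type u) [PseudoMetricSpace X] : Prop :=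
  ∀ R : ℕ → ℝ, (∀ i, 0 < R i) → (∀ i, R i ≤ R (i + 1)) →
    ∃ n : ℕ, ∃ U : ℕ → Set (Set X),
      (∀ x : X, ∃ i < n, ∃ A ∈ U i, x ∈ A) ∧
      (∀ i < n, MUnifBdd (U i)) ∧
      (∀ i < n, MDisj (R i) (U i))

/-- Coercion of pairs in a subspace to pairs in the ambient space. -/
def sprod (S : Set X) : S × S → X × X := fun p => ((p.1 : X), (p.2 : X))

/-- The subspace coarse structure. -/
def CoarseStructure.restrict (C : CoarseStructure X) (S : Set X) : CoarseStructure S where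
  IsEnt E := C.IsEnt (sprod S '' E)
  subset_mem := fun h hsub => C.subset_mem h (Set.image_mono hsub)
  union_mem := fun {E F} h1 h2 => by
    show C.IsEnt (sprod S '' (E ∪ F))
    rw [Set.image_union]; exact C.union_mem h1 h2
  diag_mem := C.subset_mem C.diag_mem (by
    rintro q ⟨p, hp, rfl⟩
    simp only [Set.mem_setOf_eq] at hp ⊢
    exact congrArg Subtype.val hp)
  inv_mem := fun {E} h => C.subset_mem (C.inv_mem h) (by
    rintro q ⟨p, hp, rfl⟩
    exact ⟨(p.2, p.1), hp, rfl⟩)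
  comp_mem := fun {E F} hE hF => C.subset_mem (C.comp_mem hE hF) (by
    rintro q ⟨p, ⟨y, h1, h2⟩, rfl⟩
    exact ⟨(y : X), ⟨(p.1, y), h1, rfl⟩, ⟨(y, p.2), h2, rfl⟩⟩)

/-- First-coordinate projection of a relation on a product. -/
def pfst : (X × Y) × (X × Y) → X × X := fun p => (p.1.1, p.2.1)

/-- Second-coordinate projection of a relation on a product. -/
def psnd : (X × Y) × (X × Y) → Y × Y := fun p => (p.1.2, p.2.2)

/-- The product coarse structure. -/
def prodCoarse (CX : CoarseStructure X) (CY : CoarseStructure Y) :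
    CoarseStructure (X × Y) where
  IsEnt E := CX.IsEnt (pfst '' E) ∧ CY.IsEnt (psnd '' E)
  subset_mem := fun h hsub =>
    ⟨CX.subset_mem h.1 (Set.image_mono hsub), CY.subset_mem h.2 (Set.image_mono hsub)⟩
  union_mem := fun {E F} h1 h2 => by
    constructor
    · show CX.IsEnt (pfst '' (E ∪ F))
      rw [Set.image_union]; exact CX.union_mem h1.1 h2.1
    · show CY.IsEnt (psnd '' (E ∪ F))
      rw [Set.image_union]; exact CY.union_mem h1.2 h2.2
  diag_mem := by
    constructor
    · exact CX.subset_mem CX.diag_mem (by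
        rintro q ⟨p, hp, rfl⟩
        simp only [Set.mem_setOf_eq] at hp ⊢
        exact congrArg Prod.fst hp)
    · exact CY.subset_mem CY.diag_mem (by
        rintro q ⟨p, hp, rfl⟩
        simp only [Set.mem_setOf_eq] at hp ⊢
        exact congrArg Prod.snd hp)
  inv_mem := fun {E} h => by
    constructor
    · exact CX.subset_mem (CX.inv_mem h.1) (by
        rintro q ⟨p, hp, rfl⟩
        exact ⟨(p.2, p.1), hp, rfl⟩)
    · exact CY.subset_mem (CY.inv_mem h.2) (by
        rintro q ⟨p, hp, rfl⟩
        exact ⟨(p.2, p.1), hp, rfl⟩)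
  comp_mem := fun {E F} hE hF => by
    constructor
    · exact CX.subset_mem (CX.comp_mem hE.1 hF.1) (by
        rintro q ⟨p, ⟨y, h1, h2⟩, rfl⟩
        exact ⟨y.1, ⟨(p.1, y), h1, rfl⟩, ⟨(y, p.2), h2, rfl⟩⟩)
    · exact CY.subset_mem (CY.comp_mem hE.2 hF.2) (by
        rintro q ⟨p, ⟨y, h1, h2⟩, rfl⟩
        exact ⟨y.2, ⟨(p.1, y), h1, rfl⟩, ⟨(y, p.2), h2, rfl⟩⟩)

/-- Game-theoretic coarse property C: Player 2 has a winning strategy. -/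
def GamePropC (C : CoarseStructure X) : Prop :=
  ∃ σ : ℕ → (ℕ → Set (X × X)) → Set (Set X),
    (∀ n : ℕ, ∀ L L' : ℕ → Set (X × X), (∀ i ≤ n, L i = L' i) → σ n L = σ n L') ∧
    ∀ L : ℕ → Set (X × X), (∀ i, C.IsEnt (L i)) →
      ∃ k : ℕ, (∀ i ≤ k, UnifBdd C (σ i L) ∧ LDisj (L i) (σ i L)) ∧
        ∀ x : X, ∃ i ≤ k, ∃ A ∈ σ i L, x ∈ A
/-!
Pad the two towers of decompositions given for `S1` and `S2` to a common length by decomposing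
each finished family trivially over itself, and take their levelwise union: an `L`-decomposition
of a member of either family is one over the union. Prefixing the step `X = S1 ∪ S2`, which is an
`L`-decomposition for every `L`, shifts the sequence of entourages by one.
-/

section Decomposition

variable {L : Set (X × X)}

lemma ldisj_of_subsingleton {U : Set (Set X)} (hU : U.Subsingleton) : LDisj L U :=
  fun _ hA _ hB hne => absurd (hU hA hB) hne

lemma weakDecomp_union {A B : Set X} {U : Set (Set X)} (hA : A ∈ U) (hB : B ∈ U) :
    WeakDecomp L 2 (A ∪ B) U := by
  refine ⟨![{A}, {B}], fun i => ?_, fun i => ldisj_of_subsingleton ?_, ?_⟩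
  · fin_cases i <;> simpa
  · fin_cases i <;> exact subsingleton_singleton
  · ext x
    simp [Fin.exists_fin_two]

lemma famDecomp_refl (F : Set (Set X)) : FamDecomp L 2 F F := fun Z hZ => by
  simpa using weakDecomp_union (L := L) hZ hZ

lemma WeakDecomp.mono {d : ℕ} {Z : Set X} {U V : Set (Set X)} (h : WeakDecomp L d Z U)
    (hUV : U ⊆ V) : WeakDecomp L d Z V :=
  let ⟨P, hPU, hPL, hZ⟩ := h
  ⟨P, fun i => (hPU i).trans hUV, hPL, hZ⟩

lemma FamDecomp.union {d : ℕ} {F F' G G' : Set (Set X)} (h : FamDecomp L d F G)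
    (h' : FamDecomp L d F' G') : FamDecomp L d (F ∪ F') (G ∪ G') := by
  rintro Z (hZ | hZ)
  · exact (h Z hZ).mono subset_union_left
  · exact (h' Z hZ).mono subset_union_right

end Decomposition

lemma famDecomp_min {L : ℕ → Set (X × X)} {Y : ℕ → Set (Set X)} {n : ℕ}
    (hY : ∀ i < n, FamDecomp (L i) 2 (Y i) (Y (i + 1))) (i : ℕ) :
    FamDecomp (L i) 2 (Y (min i n)) (Y (min (i + 1) n)) := by
  rcases lt_or_ge i n with hi | hi
  · rw [min_eq_left hi.le, min_eq_left hi]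
    exact hY i hi
  · rw [min_eq_right hi, min_eq_right (hi.trans i.le_succ)]
    exact famDecomp_refl _

lemma famDiag_union (U V : Set (Set X)) : famDiag (U ∪ V) = famDiag U ∪ famDiag V :=
  biUnion_union U V _

lemma UnifBdd.union {C : CoarseStructure X} {U V : Set (Set X)} (hU : UnifBdd C U)
    (hV : UnifBdd C V) : UnifBdd C (U ∪ V) := by
  unfold UnifBdd
  rw [famDiag_union]
  exact C.union_mem hU hV

theorem sFCDC.union {C : CoarseStructure X} {F G : Set (Set X)} (hF : sFCDC C F)
    (hG : sFCDC C G) : sFCDC C (F ∪ G) := by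
  intro L hL hmono
  obtain ⟨n, Y, rfl, hYdec, hYbdd⟩ := hF L hL hmono
  obtain ⟨m, Y', rfl, hY'dec, hY'bdd⟩ := hG L hL hmono
  refine ⟨max n m, fun i => Y (min i n) ∪ Y' (min i m), by simp, fun i _ => ?_, ?_⟩
  · exact (famDecomp_min hYdec i).union (famDecomp_min hY'dec i)
  · simpa [min_eq_right (le_max_left n m), min_eq_right (le_max_right n m)] using
      hYbdd.union hY'bdd

theorem sFCDC_of_famDecomp {C : CoarseStructure X} {F G : Set (Set X)} (hG : sFCDC C G)
    (hFG : ∀ L, C.IsEnt L → FamDecomp L 2 F G) : sFCDC C F := by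
  intro L hL hmono
  obtain ⟨n, Y, hY0, hYdec, hYbdd⟩ := hG (fun i => L (i + 1)) (fun i => hL _) (fun i => hmono _)
  refine ⟨n + 1, fun i => Nat.casesOn i F Y, rfl, ?_, hYbdd⟩
  rintro (_ | i) hi
  · simpa [hY0] using hFG (L 0) (hL 0)
  · exact hYdec i (Nat.lt_of_succ_lt_succ hi)

/-- a union of two subspaces with straight finite coarse decomposition
complexity has straight finite coarse decomposition complexity. -/
theorem stmt17 {X : Type u} (C : CoarseStructure X) (S1 S2 : Set X)
    (hcover : S1 ∪ S2 = Set.univ)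
    (h1 : sFCDC C {S1}) (h2 : sFCDC C {S2}) :
    sFCDC C {Set.univ} := by
  refine sFCDC_of_famDecomp (h1.union h2) fun L _ Z hZ => ?_
  rw [mem_singleton_iff.mp hZ, ← hcover]
  exact weakDecomp_union (Or.inl rfl) (Or.inr rfl)
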